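/- arXiv:1609.08590 — 2 statements merged into one kernel-verified Lean document; each statement's English description precedes it below -/
import Mathlib

section
/- Let N be a positive integer, (Ω, F, P) a probability space, and {Ω_{m,n} : 1 ≤ m, n ≤ N} non-negative measurable random variables. Define Γ_{m,m} = Ω_{m,m} and, for m < n, Γ_{m,n} = Ω_{m,n} · Ω_{n,m}. Assume: (i) for each subset S of J_N = {(i,j) : 1 ≤ i ≤ j ≤ N} in which any two distinct pairs have no coordinate in common, the family {Γ_{m,n} : (m,n) ∈ S} is mutually independent; (ii) E(Ω_{m,m}^N) ≤ E(Ω_{1,1}^N) for all m; (iii) there is K ∈ [0, ∞] with E(Ω_{m,n}^{2N}) ≤ K for all m ≠ n. Then E(∏_{1 ≤ m, n ≤ N} Ω_{m,n}) ≤ E(Ω_{1,1}^N) · K^{(N−1)/2}, with all expectations in [0, ∞]. -/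
open MeasureTheory ProbabilityTheory
open scoped ENNReal

/-- `J N` is the set of pairs `(i, j)` with `1 ≤ i ≤ j ≤ N`. -/
def J (N : ℕ) : Finset (ℕ × ℕ) :=
  (Finset.Icc 1 N ×ˢ Finset.Icc 1 N).filter fun p => p.1 ≤ p.2

/-- A set of pairs has no shared coordinates if any two distinct pairs in it
have no coordinate in common. -/
def NoSharedCoord (S : Finset (ℕ × ℕ)) : Prop :=
  ∀ p ∈ S, ∀ q ∈ S, p ≠ q →
    p.1 ≠ q.1 ∧ p.1 ≠ q.2 ∧ p.2 ≠ q.1 ∧ p.2 ≠ q.2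

/-- `Gam W (m, n) = W (m, m)` if `m = n` and `W (m, n) * W (n, m)` otherwise. -/
noncomputable def Gam {Ω : Type*} (W : ℕ × ℕ → Ω → ℝ≥0∞) (p : ℕ × ℕ) (ω : Ω) : ℝ≥0∞ :=
  if p.1 = p.2 then W p ω else W p ω * W (p.2, p.1) ω

/-!
Rearrange `∏_{m,n} Ω_{m,n}` as `∏_{p ∈ J_N} Γ_p` and split `J_N` into the `N` rounds
`R_r = {(m, n) : m + n ≡ r [MOD N]}` of a round-robin schedule. No two pairs of a round share
a coordinate, so the `Γ_p` in a round are independent, and Hölder's inequality with `N`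
exponents equal to `N` gives `E ∏_p Γ_p ≤ ∏_r (E ∏_{p ∈ R_r} Γ_p^N)^{1/N} = ∏_p (E Γ_p^N)^{1/N}`.
A diagonal factor is at most `E(Ω_{1,1}^N)`, an off-diagonal one is at most `K` by
Cauchy–Schwarz, and `N(N-1)/2` pairs of `J_N` are off-diagonal.
-/

open Finset

section Lintegral

variable {Ω : Type*} [MeasurableSpace Ω] {μ : Measure Ω}

lemma lintegral_mul_le_of_lintegral_sq_le {X Y : Ω → ℝ≥0∞} {K : ℝ≥0∞}
    (hX : AEMeasurable X μ) (hY : AEMeasurable Y μ)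
    (hXK : ∫⁻ ω, X ω ^ 2 ∂μ ≤ K) (hYK : ∫⁻ ω, Y ω ^ 2 ∂μ ≤ K) :
    ∫⁻ ω, X ω * Y ω ∂μ ≤ K := by
  have hsq : ∀ Z : Ω → ℝ≥0∞, ∫⁻ ω, Z ω ^ (2 : ℝ) ∂μ = ∫⁻ ω, Z ω ^ 2 ∂μ := fun Z => by
    simp_rw [← ENNReal.rpow_natCast, Nat.cast_ofNat]
  calc ∫⁻ ω, X ω * Y ω ∂μ
      ≤ (∫⁻ ω, X ω ^ (2 : ℝ) ∂μ) ^ (1 / (2 : ℝ)) * (∫⁻ ω, Y ω ^ (2 : ℝ) ∂μ) ^ (1 / (2 : ℝ)) :=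
        ENNReal.lintegral_mul_le_Lp_mul_Lq μ .two_two hX hY
    _ ≤ K ^ (1 / (2 : ℝ)) * K ^ (1 / (2 : ℝ)) := by
        rw [hsq, hsq]; gcongr
    _ = K := by
        rw [← ENNReal.rpow_add_of_nonneg _ _ (by norm_num) (by norm_num)]; norm_num

variable {ι : Type*}

lemma lintegral_prod_pow_eq_prod_lintegral_pow (s : Finset ι) {f : ι → Ω → ℝ≥0∞}
    (hf : ∀ i ∈ s, Measurable (f i)) (hindep : iIndepFun (fun i : s => f i) μ) (n : ℕ) :
    ∫⁻ ω, (∏ i ∈ s, f i ω) ^ n ∂μ = ∏ i ∈ s, ∫⁻ ω, f i ω ^ n ∂μ := by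
  have hpow := hindep.comp (fun _ x => x ^ n) fun _ => measurable_id.pow_const n
  simp_rw [← prod_pow, ← prod_coe_sort s]
  exact lintegral_prod_eq_prod_lintegral_of_indepFun _ _ hpow
    fun i => (hf i i.2).pow_const n

theorem lintegral_prod_le_of_iIndepFun_fiberwise [IsProbabilityMeasure μ]
    {κ : Type*} [DecidableEq κ]
    (s : Finset ι) (t : Finset κ) {g : ι → κ} (hg : ∀ i ∈ s, g i ∈ t) {f : ι → Ω → ℝ≥0∞}
    (hf : ∀ i ∈ s, Measurable (f i))
    (hindep : ∀ r ∈ t, iIndepFun (fun i : {i ∈ s | g i = r} => f i) μ) :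
    ∫⁻ ω, ∏ i ∈ s, f i ω ∂μ ≤ ∏ i ∈ s, (∫⁻ ω, f i ω ^ #t ∂μ) ^ (#t : ℝ)⁻¹ := by
  rcases t.eq_empty_or_nonempty with rfl | ht
  · obtain rfl : s = ∅ := eq_empty_of_forall_notMem fun i hi => by simpa using hg i hi
    simp
  have hn : (#t : ℝ) ≠ 0 := by simpa using ht.ne_empty
  have hfib : ∀ r ∈ t, ∀ i ∈ {i ∈ s | g i = r}, Measurable (f i) :=
    fun r _ i hi => hf i (mem_filter.1 hi).1
  calc ∫⁻ ω, ∏ i ∈ s, f i ω ∂μ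
      = ∫⁻ ω, ∏ r ∈ t, ((∏ i ∈ s with g i = r, f i ω) ^ #t) ^ (#t : ℝ)⁻¹ ∂μ := by
        simp_rw [← ENNReal.rpow_natCast, ← ENNReal.rpow_mul, mul_inv_cancel₀ hn,
          ENNReal.rpow_one, prod_fiberwise_of_maps_to hg]
    _ ≤ ∏ r ∈ t, (∫⁻ ω, (∏ i ∈ s with g i = r, f i ω) ^ #t ∂μ) ^ (#t : ℝ)⁻¹ := by
        refine ENNReal.lintegral_prod_norm_pow_le _ (fun r hr => ?_) ?_ fun _ _ => by positivity
        · exact ((Finset.measurable_prod _ (hfib r hr)).pow_const _).aemeasurable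
        · rw [sum_const, nsmul_eq_mul, mul_inv_cancel₀ hn]
    _ = ∏ i ∈ s, (∫⁻ ω, f i ω ^ #t ∂μ) ^ (#t : ℝ)⁻¹ := by
        rw [← prod_fiberwise_of_maps_to hg]
        refine prod_congr rfl fun r hr => ?_
        rw [lintegral_prod_pow_eq_prod_lintegral_pow _ (hfib r hr) (hindep r hr),
          ENNReal.prod_rpow_of_nonneg (by positivity)]

end Lintegral

section Pairs

lemma eq_of_modEq_of_mem_Icc {N a b : ℕ} (ha : a ∈ Icc 1 N) (hb : b ∈ Icc 1 N)
    (h : a ≡ b [MOD N]) : a = b := by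
  rw [mem_Icc] at ha hb
  have key : ∀ {x y}, x ≤ y → y ≤ N → 1 ≤ x → x ≡ y [MOD N] → x = y := fun hxy hy hx h => by
    have := Nat.eq_zero_of_dvd_of_lt ((Nat.modEq_iff_dvd' hxy).1 h) (by omega)
    omega
  rcases le_total a b with hab | hba
  · exact key hab hb.2 ha.1 h
  · exact (key hba ha.2 hb.1 h.symm).symm

lemma mem_J {N : ℕ} {p : ℕ × ℕ} : p ∈ J N ↔ p.1 ∈ Icc 1 N ∧ p.2 ∈ Icc 1 N ∧ p.1 ≤ p.2 := by
  simp [J, and_assoc]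

lemma noSharedCoord_filter_J_add_mod (N r : ℕ) :
    NoSharedCoord {p ∈ J N | (p.1 + p.2) % N = r} := by
  rintro ⟨a, b⟩ hp ⟨c, d⟩ hq hne
  simp only [mem_filter, mem_J] at hp hq
  obtain ⟨⟨ha, hb, hab⟩, hr⟩ := hp
  obtain ⟨⟨hc, hd, hcd⟩, rfl⟩ := hq
  have cancel : ∀ {x y z}, y ∈ Icc 1 N → z ∈ Icc 1 N → x + y = a + b →
      (x + z) % N = (c + d) % N → y = z :=
    fun hy hz hxy hxz => eq_of_modEq_of_mem_Icc hy hz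
      (Nat.ModEq.add_left_cancel' _ (hxy ▸ hr.trans hxz.symm : _ ≡ _ [MOD N]))
  simp only [Ne, Prod.mk.injEq] at hne ⊢
  refine ⟨fun h => ?_, fun h => ?_, fun h => ?_, fun h => ?_⟩ <;> subst h
  · exact hne ⟨rfl, cancel hb hd rfl rfl⟩
  · have := cancel hb hc rfl (by rw [add_comm])
    omega
  · have := cancel ha hd (add_comm _ _) rfl
    omega
  · exact hne ⟨cancel ha hc (add_comm _ _) (by rw [add_comm]), rfl⟩

lemma filter_J_ne (N : ℕ) :
    {p ∈ J N | p.1 ≠ p.2} = {p ∈ Icc 1 N ×ˢ Icc 1 N | p.1 < p.2} := by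
  ext p
  simp only [J, mem_filter, and_assoc, lt_iff_le_and_ne]

lemma card_filter_J_eq (N : ℕ) : #{p ∈ J N | p.1 = p.2} = N := by
  rw [show {p ∈ J N | p.1 = p.2} = (Icc 1 N).diag by ext; simp [J]; grind, diag_card,
    Nat.card_Icc, Nat.add_sub_cancel]

lemma card_filter_J_ne (N : ℕ) : #{p ∈ J N | p.1 ≠ p.2} = N.choose 2 := by
  rw [filter_J_ne, card_product_filter_lt, Nat.card_Icc, Nat.add_sub_cancel]

lemma prod_J_ite_rpow_inv {N : ℕ} (hN : N ≠ 0) (a b : ℝ≥0∞) :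
    ∏ p ∈ J N, (if p.1 = p.2 then a else b) ^ (N : ℝ)⁻¹ = a * b ^ (((N : ℝ) - 1) / 2) := by
  have hN' : (N : ℝ) ≠ 0 := Nat.cast_ne_zero.2 hN
  simp_rw [apply_ite (· ^ (N : ℝ)⁻¹), prod_ite, prod_const, card_filter_J_eq, card_filter_J_ne,
    ← ENNReal.rpow_natCast, ← ENNReal.rpow_mul, Nat.cast_choose_two]
  congr 1
  · rw [inv_mul_cancel₀ hN', ENNReal.rpow_one]
  · congr 1; field_simp

lemma prod_Icc_product_eq_prod_J_Gam {Ω : Type*} (N : ℕ) (W : ℕ × ℕ → Ω → ℝ≥0∞) (ω : Ω) :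
    ∏ p ∈ Icc 1 N ×ˢ Icc 1 N, W p ω = ∏ p ∈ J N, Gam W p ω := by
  have hGam : ∀ p ∈ J N, Gam W p ω = W p ω * if p.1 = p.2 then 1 else W (p.2, p.1) ω :=
    fun p _ => by unfold Gam; split_ifs <;> simp
  have hlower : ∏ p ∈ Icc 1 N ×ˢ Icc 1 N with ¬ p.1 ≤ p.2, W p ω
      = ∏ p ∈ J N with p.1 ≠ p.2, W (p.2, p.1) ω := by
    rw [filter_J_ne]
    exact prod_equiv (Equiv.prodComm ℕ ℕ) (by simp; tauto) fun _ _ => rfl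
  rw [prod_congr rfl hGam, prod_mul_distrib, prod_ite, prod_const_one, one_mul, ← hlower]
  exact (prod_filter_mul_prod_filter_not _ _ _).symm

end Pairs

section Gam

variable {Ω : Type*} [MeasurableSpace Ω] {W : ℕ × ℕ → Ω → ℝ≥0∞}

lemma measurable_Gam {p : ℕ × ℕ} (hp : Measurable (W p)) (hp' : Measurable (W (p.2, p.1))) :
    Measurable (Gam W p) := by
  unfold Gam
  split_ifs
  exacts [hp, hp.mul hp']

lemma lintegral_Gam_pow_le_of_ne {μ : Measure Ω} {m n N : ℕ} {K : ℝ≥0∞} (hmn : m ≠ n)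
    (hmeas : Measurable (W (m, n))) (hmeas' : Measurable (W (n, m)))
    (hK : ∫⁻ ω, W (m, n) ω ^ (2 * N) ∂μ ≤ K) (hK' : ∫⁻ ω, W (n, m) ω ^ (2 * N) ∂μ ≤ K) :
    ∫⁻ ω, Gam W (m, n) ω ^ N ∂μ ≤ K := by
  simp only [Gam, if_neg hmn, mul_pow]
  refine lintegral_mul_le_of_lintegral_sq_le (hmeas.pow_const N).aemeasurable
    (hmeas'.pow_const N).aemeasurable ?_ ?_ <;>
  simpa only [← pow_mul, mul_comm N 2]

end Gam

/-- If `{W (m, n) : 1 ≤ m, n ≤ N}` are nonnegative random variables such that the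
variables `Γ_{m,m} = W_{m,m}`, `Γ_{m,n} = W_{m,n} W_{n,m}` (`m < n`) are mutually
independent along any family of pairs sharing no coordinate, the diagonal moments are
dominated by that of `W_{1,1}`, and the off-diagonal `2N`-th moments are bounded by
`K`, then `E (∏_{m,n} W_{m,n}) ≤ E (W_{1,1}^N) * K^{(N-1)/2}`. -/
theorem expectation_prod_le_of_partial_independence'
    {Ω : Type*} [MeasurableSpace Ω] (μ : Measure Ω) [IsProbabilityMeasure μ]
    (N : ℕ) (hN : 0 < N) (W : ℕ × ℕ → Ω → ℝ≥0∞)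
    (hmeas : ∀ p ∈ Finset.Icc 1 N ×ˢ Finset.Icc 1 N, Measurable (W p))
    (hindep : ∀ S : Finset (ℕ × ℕ), S ⊆ J N → NoSharedCoord S →
      iIndepFun
        (fun p : S => Gam W p) μ)
    (hdiag : ∀ m ∈ Finset.Icc 1 N, ∫⁻ ω, W (m, m) ω ^ N ∂μ ≤ ∫⁻ ω, W (1, 1) ω ^ N ∂μ)
    (K : ℝ≥0∞)
    (hK : ∀ m ∈ Finset.Icc 1 N, ∀ n ∈ Finset.Icc 1 N, m ≠ n →
      ∫⁻ ω, W (m, n) ω ^ (2 * N) ∂μ ≤ K) :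
    ∫⁻ ω, ∏ p ∈ Finset.Icc 1 N ×ˢ Finset.Icc 1 N, W p ω ∂μ ≤
      (∫⁻ ω, W (1, 1) ω ^ N ∂μ) * K ^ (((N : ℝ) - 1) / 2) := by
  have hmeasJ : ∀ p ∈ J N, Measurable (W p) ∧ Measurable (W (p.2, p.1)) := fun p hp => by
    rw [mem_J] at hp
    exact ⟨hmeas p (mem_product.2 ⟨hp.1, hp.2.1⟩), hmeas _ (mem_product.2 ⟨hp.2.1, hp.1⟩)⟩
  have hbound : ∀ p ∈ J N, ∫⁻ ω, Gam W p ω ^ N ∂μ ≤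
      if p.1 = p.2 then ∫⁻ ω, W (1, 1) ω ^ N ∂μ else K := by
    rintro ⟨m, n⟩ hp
    obtain ⟨hm, hn, -⟩ := mem_J.1 hp
    split_ifs with hmn
    · obtain rfl : m = n := hmn
      simpa [Gam] using hdiag m hm
    · exact lintegral_Gam_pow_le_of_ne hmn (hmeasJ _ hp).1 (hmeasJ _ hp).2
        (hK m hm n hn hmn) (hK n hn m hm (Ne.symm hmn))
  calc ∫⁻ ω, ∏ p ∈ Icc 1 N ×ˢ Icc 1 N, W p ω ∂μ = ∫⁻ ω, ∏ p ∈ J N, Gam W p ω ∂μ := by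
        simp_rw [prod_Icc_product_eq_prod_J_Gam]
    _ ≤ ∏ p ∈ J N, (∫⁻ ω, Gam W p ω ^ #(range N) ∂μ) ^ (#(range N) : ℝ)⁻¹ :=
        lintegral_prod_le_of_iIndepFun_fiberwise (J N) (range N)
          (fun p _ => mem_range.2 (Nat.mod_lt _ hN))
          (fun p hp => measurable_Gam (hmeasJ p hp).1 (hmeasJ p hp).2)
          fun r _ => hindep _ (filter_subset _ _) (noSharedCoord_filter_J_add_mod N r)
    _ ≤ ∏ p ∈ J N, (if p.1 = p.2 then ∫⁻ ω, W (1, 1) ω ^ N ∂μ else K) ^ (N : ℝ)⁻¹ := by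
        rw [card_range]
        gcongr with p hp
        exact hbound p hp
    _ = _ := prod_J_ite_rpow_inv hN.ne' _ _
end

section
/- Define I(T) = ∫₀^T ∫₀^t ∫₀^∞ e^{−r² t/2} e^{−r² s/2} e^{−r(t − s)} r dr ds dt for T > 0. Then there exist a constant C > 0 and T₀ > 0 such that I(T) ≤ C T^{3/4} for all T ≥ T₀; in particular I(T)/T → 0 as T → ∞. (This follows from the bound I(T) ≤ −2T log(1 − ε/2) + 3ε^{−2} for 0 < ε < 2 by choosing ε so that 1 − ε/2 = e^{−T^{−1/4}}.) -/
open MeasureTheory Real Filter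

/-- `I T = ∫₀^T ∫₀^t ∫₀^∞ e^{-r²t/2} e^{-r²s/2} e^{-r(t-s)} r dr ds dt`. -/
noncomputable def Iint (T : ℝ) : ℝ :=
  ∫ t in Set.Ioc (0 : ℝ) T, ∫ s in Set.Ioc (0 : ℝ) t, ∫ r in Set.Ioi (0 : ℝ),
    Real.exp (-(r ^ 2 * t / 2)) * Real.exp (-(r ^ 2 * s / 2)) *
      Real.exp (-(r * (t - s))) * r

/-!
The inner radial integral `J(t, s) = radialIntegral t s` is at most `1/t` (drop all factors but
the Gaussian `e^{-r²t/2}`) and at most `1/(t-s)²` (keep only `e^{-r(t-s)}`). Their weighted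
geometric mean `t^{-3/4} (t-s)^{-1/2}` is still integrable at `s = t`, so
`∫₀^t J(t, s) ds ≤ 2 t^{-1/4}`, and integrating in `t` gives `I(T) ≤ (8/3) T^{3/4}`.
-/

open Set

theorem integral_mul_exp_neg_mul_sq_Ioi {b : ℝ} (hb : 0 < b) :
    ∫ x in Ioi (0 : ℝ), x * exp (-(b * x ^ 2)) = (2 * b)⁻¹ := by
  have h := integral_rpow_mul_exp_neg_mul_rpow two_pos (by norm_num : (-1 : ℝ) < 1) hb
  norm_num [rpow_two, rpow_neg_one] at h
  rw [h]
  ring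

theorem integral_mul_exp_neg_mul_Ioi {b : ℝ} (hb : 0 < b) :
    ∫ x in Ioi (0 : ℝ), x * exp (-(b * x)) = (b ^ 2)⁻¹ := by
  have h := integral_rpow_mul_exp_neg_mul_rpow one_pos (by norm_num : (-1 : ℝ) < 1) hb
  norm_num [Gamma_two, rpow_neg hb.le, rpow_two] at h
  exact h

theorem le_rpow_mul_rpow_of_le_of_le {x a b θ : ℝ} (hx : 0 ≤ x) (ha : x ≤ a) (hb : x ≤ b)
    (hθ₀ : 0 ≤ θ) (hθ₁ : θ ≤ 1) : x ≤ a ^ θ * b ^ (1 - θ) :=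
  calc x = x ^ θ * x ^ (1 - θ) := by rw [← rpow_add' hx (by simp), add_sub_cancel, rpow_one]
    _ ≤ a ^ θ * b ^ (1 - θ) := by gcongr; exact rpow_nonneg (hx.trans ha) θ

theorem integral_sub_rpow_Ioc {t r : ℝ} (ht : 0 ≤ t) (hr : -1 < r) :
    ∫ s in Ioc 0 t, (t - s) ^ r = t ^ (r + 1) / (r + 1) := by
  rw [← intervalIntegral.integral_of_le ht,
    intervalIntegral.integral_comp_sub_left (fun x => x ^ r), sub_self, sub_zero,
    integral_rpow (Or.inl hr), zero_rpow (by linarith), sub_zero]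

theorem integrableOn_sub_rpow_Ioc {t r : ℝ} (ht : 0 ≤ t) (hr : -1 < r) :
    IntegrableOn (fun s => (t - s) ^ r) (Ioc 0 t) := by
  have := (intervalIntegral.intervalIntegrable_rpow' hr (a := 0) (b := t)).comp_sub_left t
  rw [sub_zero, sub_self] at this
  exact (intervalIntegrable_iff_integrableOn_Ioc_of_le ht).1 this.symm

noncomputable def radialIntegral (t s : ℝ) : ℝ :=
  ∫ r in Ioi (0 : ℝ), exp (-(r ^ 2 * t / 2)) * exp (-(r ^ 2 * s / 2)) * exp (-(r * (t - s))) * r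

theorem Iint_eq_integral_radialIntegral (T : ℝ) :
    Iint T = ∫ t in Ioc 0 T, ∫ s in Ioc 0 t, radialIntegral t s :=
  rfl

theorem radialIntegral_nonneg (t s : ℝ) : 0 ≤ radialIntegral t s :=
  setIntegral_nonneg measurableSet_Ioi fun r (hr : 0 < r) => by positivity

theorem radialIntegral_le_of_le {t s : ℝ} {g : ℝ → ℝ} (hg : IntegrableOn g (Ioi 0))
    (h : ∀ r > 0, exp (-(r ^ 2 * t / 2)) * exp (-(r ^ 2 * s / 2)) * exp (-(r * (t - s))) * r
      ≤ g r) :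
    radialIntegral t s ≤ ∫ r in Ioi 0, g r := by
  refine integral_mono_of_nonneg ?_ hg ((ae_restrict_mem measurableSet_Ioi).mono h)
  filter_upwards [ae_restrict_mem measurableSet_Ioi] with r (hr : 0 < r)
  positivity

theorem radialIntegral_le_inv {t s : ℝ} (ht : 0 < t) (hs : 0 ≤ s) (hst : s ≤ t) :
    radialIntegral t s ≤ t⁻¹ := by
  have hgauss := integrableOn_rpow_mul_exp_neg_mul_sq (half_pos ht) (s := 1) (by norm_num)
  simp only [rpow_one, neg_mul] at hgauss
  calc radialIntegral t s ≤ ∫ r in Ioi 0, r * exp (-(t / 2 * r ^ 2)) := by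
        refine radialIntegral_le_of_le hgauss fun r hr => ?_
        have h₁ : exp (-(r ^ 2 * s / 2)) ≤ 1 := exp_le_one_iff.2 (by nlinarith)
        have h₂ : exp (-(r * (t - s))) ≤ 1 := exp_le_one_iff.2 (by nlinarith)
        calc _ ≤ exp (-(r ^ 2 * t / 2)) * 1 * 1 * r := by gcongr
          _ = r * exp (-(t / 2 * r ^ 2)) := by ring_nf
    _ = t⁻¹ := by rw [integral_mul_exp_neg_mul_sq_Ioi (half_pos ht)]; ring

theorem radialIntegral_le_inv_sq {t s : ℝ} (hs : 0 ≤ s) (hst : s < t) :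
    radialIntegral t s ≤ ((t - s) ^ 2)⁻¹ := by
  have hts : 0 < t - s := sub_pos.2 hst
  have hexp := integrableOn_rpow_mul_exp_neg_mul_rpow (s := 1) (p := 1) (by norm_num) one_pos hts
  simp only [rpow_one, neg_mul] at hexp
  calc radialIntegral t s ≤ ∫ r in Ioi 0, r * exp (-((t - s) * r)) := by
        refine radialIntegral_le_of_le hexp fun r hr => ?_
        have h₁ : exp (-(r ^ 2 * t / 2)) ≤ 1 := exp_le_one_iff.2 (by nlinarith)
        have h₂ : exp (-(r ^ 2 * s / 2)) ≤ 1 := exp_le_one_iff.2 (by nlinarith)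
        calc _ ≤ 1 * 1 * exp (-(r * (t - s))) * r := by gcongr
          _ = r * exp (-((t - s) * r)) := by ring_nf
    _ = ((t - s) ^ 2)⁻¹ := integral_mul_exp_neg_mul_Ioi hts

theorem radialIntegral_le_rpow {t s : ℝ} (hs : 0 ≤ s) (hst : s < t) :
    radialIntegral t s ≤ t ^ (-(3 / 4 : ℝ)) * (t - s) ^ (-(1 / 2 : ℝ)) := by
  have ht : 0 < t := hs.trans_lt hst
  have hts : 0 < t - s := sub_pos.2 hst
  convert le_rpow_mul_rpow_of_le_of_le (radialIntegral_nonneg t s)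
    (radialIntegral_le_inv ht hs hst.le) (radialIntegral_le_inv_sq hs hst)
    (θ := 3 / 4) (by norm_num) (by norm_num) using 2
  · rw [rpow_neg ht.le, inv_rpow ht.le]
  · rw [inv_rpow (by positivity), ← rpow_natCast, ← rpow_mul hts.le, rpow_neg hts.le]
    norm_num

theorem integral_radialIntegral_le {t : ℝ} (ht : 0 < t) :
    ∫ s in Ioc 0 t, radialIntegral t s ≤ 2 * t ^ (-(1 / 4 : ℝ)) := by
  have hint : IntegrableOn (fun s => t ^ (-(3 / 4 : ℝ)) * (t - s) ^ (-(1 / 2 : ℝ))) (Ioc 0 t) :=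
    (integrableOn_sub_rpow_Ioc ht.le (by norm_num)).const_mul _
  calc ∫ s in Ioc 0 t, radialIntegral t s
      ≤ ∫ s in Ioc 0 t, t ^ (-(3 / 4 : ℝ)) * (t - s) ^ (-(1 / 2 : ℝ)) := by
        rw [integral_Ioc_eq_integral_Ioo, integral_Ioc_eq_integral_Ioo]
        refine integral_mono_of_nonneg (ae_of_all _ fun s => radialIntegral_nonneg t s)
          (hint.mono_set Ioo_subset_Ioc_self) ?_
        filter_upwards [ae_restrict_mem measurableSet_Ioo] with s hs
        exact radialIntegral_le_rpow hs.1.le hs.2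
    _ = 2 * t ^ (-(1 / 4 : ℝ)) := by
        rw [integral_const_mul, integral_sub_rpow_Ioc ht.le (by norm_num), ← mul_div_assoc,
          ← rpow_add ht]
        norm_num
        ring

theorem Iint_nonneg (T : ℝ) : 0 ≤ Iint T := by
  rw [Iint_eq_integral_radialIntegral]
  exact setIntegral_nonneg measurableSet_Ioc fun t _ =>
    setIntegral_nonneg measurableSet_Ioc fun s _ => radialIntegral_nonneg t s

theorem Iint_le {T : ℝ} (hT : 0 ≤ T) : Iint T ≤ 8 / 3 * T ^ (3 / 4 : ℝ) := by
  have hint : IntegrableOn (fun t : ℝ => 2 * t ^ (-(1 / 4 : ℝ))) (Ioc 0 T) :=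
    ((intervalIntegrable_iff_integrableOn_Ioc_of_le hT).1
      (intervalIntegral.intervalIntegrable_rpow' (by norm_num))).const_mul 2
  rw [Iint_eq_integral_radialIntegral]
  calc ∫ t in Ioc 0 T, ∫ s in Ioc 0 t, radialIntegral t s
      ≤ ∫ t in Ioc 0 T, 2 * t ^ (-(1 / 4 : ℝ)) := by
        refine integral_mono_of_nonneg (ae_of_all _ fun t => ?_) hint ?_
        · exact setIntegral_nonneg measurableSet_Ioc fun s _ => radialIntegral_nonneg t s
        · filter_upwards [ae_restrict_mem measurableSet_Ioc] with t ht
          exact integral_radialIntegral_le ht.1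
    _ = 8 / 3 * T ^ (3 / 4 : ℝ) := by
        rw [← intervalIntegral.integral_of_le hT, intervalIntegral.integral_const_mul,
          integral_rpow (Or.inl (by norm_num)), zero_rpow (by norm_num)]
        norm_num
        ring

theorem Iint_sublinear :
    (∃ C > (0 : ℝ), ∃ T₀ > (0 : ℝ), ∀ T ≥ T₀, Iint T ≤ C * T ^ ((3 : ℝ) / 4)) ∧
      Tendsto (fun T => Iint T / T) atTop (nhds 0) := by
  refine ⟨⟨8 / 3, by norm_num, 1, one_pos, fun T hT => Iint_le (zero_le_one.trans hT)⟩, ?_⟩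
  have hlim := (tendsto_rpow_neg_atTop (by norm_num : (0 : ℝ) < 1 / 4)).const_mul (8 / 3 : ℝ)
  rw [mul_zero] at hlim
  refine tendsto_of_tendsto_of_tendsto_of_le_of_le' tendsto_const_nhds hlim ?_ ?_
  · filter_upwards [eventually_ge_atTop 0] with T hT
    exact div_nonneg (Iint_nonneg T) hT
  · filter_upwards [eventually_gt_atTop 0] with T hT
    calc Iint T / T ≤ 8 / 3 * T ^ (3 / 4 : ℝ) / T := by gcongr; exact Iint_le hT.le
      _ = 8 / 3 * T ^ (-(1 / 4 : ℝ)) := by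
        rw [mul_div_assoc, ← rpow_sub_one hT.ne']
        norm_num
end
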